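/- Let g_c : ℝ → ℝ be a density generator, ρ ∈ (−1,1), and let f_S(z₁,z₂) = g_c((z₁² − 2ρ z₁ z₂ + z₂²)/(1−ρ²)) / (√(1−ρ²) Z_{g_c}) with Z_{g_c} := π ∫₀^∞ g_c(u) du be the standard bivariate elliptically symmetric density. Suppose ϑ : ℝ → ℝ satisfies ∫_{ℝ²} exp(s₁ z₁ + s₂ z₂) f_S(z₁,z₂) dz₁ dz₂ = ϑ(s₁² + 2ρ s₁ s₂ + s₂²) for all (s₁,s₂) ∈ ℝ². Let η₁, η₂, σ₁, σ₂ > 0 and let (T₁, T₂) have the BLS(η₁,η₂,σ₁,σ₂,ρ; g_c) density. Then for every r ∈ ℝ and for i = 1,2, E(Tᵢ^r) = ηᵢ^r · ϑ(σᵢ² r²). -/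

import Mathlib

/-!
Under the log-location-scale map `zᵢ ↦ ηᵢ exp (σᵢ zᵢ)` the BLS density, multiplied by the
Jacobian `η₁σ₁e^{σ₁z₁} · η₂σ₂e^{σ₂z₂}`, becomes the standard BES density, while
`Tᵢ^r` becomes `ηᵢ^r exp (σᵢ r zᵢ)`. Hence the mixed moment `E(T₁^{r₁} T₂^{r₂})` is
`η₁^{r₁} η₂^{r₂}` times the BES moment generating function at `(σ₁r₁, σ₂r₂)`, that is
`η₁^{r₁} η₂^{r₂} ϑ((σ₁r₁)² + 2ρσ₁r₁σ₂r₂ + (σ₂r₂)²)`; take `(r₁, r₂) = (r, 0)` and `(0, r)`.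
-/

open MeasureTheory Real Set

/-- Standardized log-transform `t̃ = (log t − log η)/σ`. -/
noncomputable def logStd (η σ t : ℝ) : ℝ := (Real.log t - Real.log η) / σ

/-- The bivariate log-symmetric density `BLS(η₁,η₂,σ₁,σ₂,ρ; g)` with partition function
`Z_g = π ∫₀^∞ g`. -/
noncomputable def blsDensity (g : ℝ → ℝ) (η₁ η₂ σ₁ σ₂ ρ : ℝ) (t : ℝ × ℝ) : ℝ :=
  if 0 < t.1 ∧ 0 < t.2 then
    g ((logStd η₁ σ₁ t.1 ^ 2 - 2 * ρ * logStd η₁ σ₁ t.1 * logStd η₂ σ₂ t.2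
        + logStd η₂ σ₂ t.2 ^ 2) / (1 - ρ ^ 2)) /
      (t.1 * t.2 * σ₁ * σ₂ * Real.sqrt (1 - ρ ^ 2) * (π * ∫ u in Ioi (0 : ℝ), g u))
  else 0

/-- The standard bivariate elliptically symmetric density with generator `g` and
correlation `ρ`. -/
noncomputable def besStdDensity (g : ℝ → ℝ) (ρ z₁ z₂ : ℝ) : ℝ :=
  g ((z₁ ^ 2 - 2 * ρ * z₁ * z₂ + z₂ ^ 2) / (1 - ρ ^ 2)) /
    (Real.sqrt (1 - ρ ^ 2) * (π * ∫ u in Ioi (0 : ℝ), g u))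

section LogScale

variable {η σ : ℝ}

lemma logStd_mul_exp (hη : 0 < η) (hσ : σ ≠ 0) (x : ℝ) : logStd η σ (η * exp (σ * x)) = x := by
  rw [logStd, log_mul hη.ne' (exp_pos _).ne', log_exp]
  field_simp
  ring

lemma mul_exp_logStd (hη : 0 < η) (hσ : σ ≠ 0) {t : ℝ} (ht : 0 < t) :
    η * exp (σ * logStd η σ t) = t := by
  rw [logStd, mul_div_cancel₀ _ hσ, exp_sub, exp_log ht, exp_log hη]
  field_simp

lemma range_mul_exp_mul (hη : 0 < η) (hσ : σ ≠ 0) :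
    range (fun x => η * exp (σ * x)) = Ioi 0 := by
  refine Subset.antisymm ?_ fun t ht => ⟨logStd η σ t, mul_exp_logStd hη hσ ht⟩
  rintro _ ⟨x, rfl⟩
  exact mul_pos hη (exp_pos _)

lemma injective_mul_exp_mul (hη : 0 < η) (hσ : σ ≠ 0) :
    Function.Injective (fun x => η * exp (σ * x)) :=
  Function.LeftInverse.injective (logStd_mul_exp hη hσ)

lemma hasDerivAt_mul_exp_mul (η σ x : ℝ) :
    HasDerivAt (fun x => η * exp (σ * x)) (η * σ * exp (σ * x)) x := by
  simpa [mul_comm, mul_assoc, mul_left_comm] using ((hasDerivAt_mul_const σ).exp).const_mul η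

lemma mul_exp_mul_rpow (hη : 0 < η) (σ x r : ℝ) :
    (η * exp (σ * x)) ^ r = η ^ r * exp (σ * r * x) := by
  rw [mul_rpow hη.le (exp_pos _).le, ← exp_mul]
  ring_nf

end LogScale

theorem integral_Ioi_prod_Ioi_eq_integral_mul_exp {E : Type*} [NormedAddCommGroup E]
    [NormedSpace ℝ E] {η₁ η₂ σ₁ σ₂ : ℝ} (hη₁ : 0 < η₁) (hη₂ : 0 < η₂) (hσ₁ : σ₁ ≠ 0)
    (hσ₂ : σ₂ ≠ 0) (h : ℝ × ℝ → E) :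
    ∫ t in Ioi 0 ×ˢ Ioi 0, h t =
      ∫ z : ℝ × ℝ, |η₁ * σ₁ * exp (σ₁ * z.1) * (η₂ * σ₂ * exp (σ₂ * z.2))| •
        h (η₁ * exp (σ₁ * z.1), η₂ * exp (σ₂ * z.2)) := by
  set φ := Prod.map (fun x => η₁ * exp (σ₁ * x)) (fun y => η₂ * exp (σ₂ * y))
  have himage : φ '' univ = Ioi 0 ×ˢ Ioi 0 := by
    rw [image_univ, range_prodMap, range_mul_exp_mul hη₁ hσ₁, range_mul_exp_mul hη₂ hσ₂]
  have hderiv (z : ℝ × ℝ) : HasFDerivWithinAt φ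
      (((1 : ℝ →L[ℝ] ℝ).smulRight (η₁ * σ₁ * exp (σ₁ * z.1))).prodMap
        ((1 : ℝ →L[ℝ] ℝ).smulRight (η₂ * σ₂ * exp (σ₂ * z.2)))) univ z :=
    ((hasDerivAt_mul_exp_mul η₁ σ₁ z.1).hasFDerivAt.prodMap z
      (hasDerivAt_mul_exp_mul η₂ σ₂ z.2).hasFDerivAt).hasFDerivWithinAt
  rw [← himage, integral_image_eq_integral_abs_det_fderiv_smul volume MeasurableSet.univ
    (fun z _ => hderiv z) ((injective_mul_exp_mul hη₁ hσ₁).prodMap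
      (injective_mul_exp_mul hη₂ hσ₂)).injOn, Measure.restrict_univ]
  simp [ContinuousLinearMap.det, LinearMap.det_prodMap, φ, Prod.map]

section BLS

variable (g : ℝ → ℝ) (ρ : ℝ) {η₁ η₂ σ₁ σ₂ : ℝ}

theorem mul_blsDensity_mul_exp_eq_besStdDensity (hη₁ : 0 < η₁) (hη₂ : 0 < η₂)
    (hσ₁ : 0 < σ₁) (hσ₂ : 0 < σ₂) (z : ℝ × ℝ) :
    η₁ * σ₁ * exp (σ₁ * z.1) * (η₂ * σ₂ * exp (σ₂ * z.2)) *
        blsDensity g η₁ η₂ σ₁ σ₂ ρ (η₁ * exp (σ₁ * z.1), η₂ * exp (σ₂ * z.2)) =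
      besStdDensity g ρ z.1 z.2 := by
  have hJ : 0 < η₁ * σ₁ * exp (σ₁ * z.1) * (η₂ * σ₂ * exp (σ₂ * z.2)) := by positivity
  rw [blsDensity, if_pos ⟨by positivity, by positivity⟩, logStd_mul_exp hη₁ hσ₁.ne',
    logStd_mul_exp hη₂ hσ₂.ne', besStdDensity, mul_div_assoc']
  conv_rhs => rw [← mul_div_mul_left _ _ hJ.ne']
  congr 1
  ring

theorem integral_rpow_mul_rpow_mul_blsDensity (hη₁ : 0 < η₁) (hη₂ : 0 < η₂)
    (hσ₁ : 0 < σ₁) (hσ₂ : 0 < σ₂) (r₁ r₂ : ℝ) :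
    ∫ t : ℝ × ℝ, t.1 ^ r₁ * t.2 ^ r₂ * blsDensity g η₁ η₂ σ₁ σ₂ ρ t =
      η₁ ^ r₁ * η₂ ^ r₂ *
        ∫ z : ℝ × ℝ, exp (σ₁ * r₁ * z.1 + σ₂ * r₂ * z.2) * besStdDensity g ρ z.1 z.2 := by
  have hquadrant : ∀ t ∉ Ioi (0 : ℝ) ×ˢ Ioi (0 : ℝ),
      t.1 ^ r₁ * t.2 ^ r₂ * blsDensity g η₁ η₂ σ₁ σ₂ ρ t = 0 := fun t ht => by
    rw [blsDensity, if_neg (by simpa using ht), mul_zero]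
  rw [← setIntegral_eq_integral_of_forall_compl_eq_zero hquadrant,
    integral_Ioi_prod_Ioi_eq_integral_mul_exp hη₁ hη₂ hσ₁.ne' hσ₂.ne', ← integral_const_mul]
  congr 1 with z
  rw [abs_of_pos (by positivity), smul_eq_mul, mul_exp_mul_rpow hη₁, mul_exp_mul_rpow hη₂,
    ← mul_blsDensity_mul_exp_eq_besStdDensity g ρ hη₁ hη₂ hσ₁ hσ₂, exp_add]
  ring

end BLS

lemma measurable_blsDensity {g : ℝ → ℝ} (hg : Measurable g) (η₁ η₂ σ₁ σ₂ ρ : ℝ) :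
    Measurable (blsDensity g η₁ η₂ σ₁ σ₂ ρ) := by
  refine Measurable.ite ?_ (by unfold logStd; fun_prop) measurable_const
  exact (measurableSet_lt measurable_const measurable_fst).inter
    (measurableSet_lt measurable_const measurable_snd)

lemma blsDensity_nonneg {g : ℝ → ℝ} (hg : ∀ u, 0 ≤ g u) (η₁ η₂ : ℝ) {σ₁ σ₂ : ℝ}
    (hσ₁ : 0 < σ₁) (hσ₂ : 0 < σ₂) (ρ : ℝ) (t : ℝ × ℝ) :
    0 ≤ blsDensity g η₁ η₂ σ₁ σ₂ ρ t := by
  unfold blsDensity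
  split_ifs with ht
  · obtain ⟨ht₁, ht₂⟩ := ht
    have hZ : 0 ≤ ∫ u in Ioi (0 : ℝ), g u := setIntegral_nonneg measurableSet_Ioi fun u _ => hg u
    exact div_nonneg (hg _) (by positivity)
  · exact le_rfl

theorem integral_comp_eq_integral_mul_of_map_eq_withDensity {Ω α : Type*} [MeasurableSpace Ω]
    [MeasurableSpace α] {P : Measure Ω} {μ : Measure α} {X : Ω → α} (hX : AEMeasurable X P)
    {f : α → ℝ} (hf : Measurable f) (hf_nonneg : ∀ x, 0 ≤ f x)
    (hmap : P.map X = μ.withDensity fun x => ENNReal.ofReal (f x)) {h : α → ℝ}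
    (hh : Measurable h) :
    ∫ ω, h (X ω) ∂P = ∫ x, h x * f x ∂μ := by
  rw [← integral_map hX hh.aestronglyMeasurable, hmap,
    integral_withDensity_eq_integral_toReal_smul hf.ennreal_ofReal
      (Filter.Eventually.of_forall fun _ => ENNReal.ofReal_lt_top)]
  simp_rw [ENNReal.toReal_ofReal (hf_nonneg _), smul_eq_mul, mul_comm]

theorem integral_rpow_mul_rpow_of_map_eq_bls {Ω : Type*} [MeasurableSpace Ω] {P : Measure Ω}
    {g : ℝ → ℝ} (hg_meas : Measurable g) (hg_nonneg : ∀ u, 0 ≤ g u) (ρ : ℝ)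
    {η₁ η₂ σ₁ σ₂ : ℝ} (hη₁ : 0 < η₁) (hη₂ : 0 < η₂) (hσ₁ : 0 < σ₁) (hσ₂ : 0 < σ₂)
    {T₁ T₂ : Ω → ℝ} (hT₁ : Measurable T₁) (hT₂ : Measurable T₂)
    (hT : P.map (fun ω => (T₁ ω, T₂ ω)) =
      volume.withDensity fun t => ENNReal.ofReal (blsDensity g η₁ η₂ σ₁ σ₂ ρ t))
    (r₁ r₂ : ℝ) :
    ∫ ω, T₁ ω ^ r₁ * T₂ ω ^ r₂ ∂P =
      η₁ ^ r₁ * η₂ ^ r₂ *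
        ∫ z : ℝ × ℝ, exp (σ₁ * r₁ * z.1 + σ₂ * r₂ * z.2) * besStdDensity g ρ z.1 z.2 := by
  rw [← integral_rpow_mul_rpow_mul_blsDensity g ρ hη₁ hη₂ hσ₁ hσ₂]
  exact integral_comp_eq_integral_mul_of_map_eq_withDensity (h := fun t => t.1 ^ r₁ * t.2 ^ r₂)
    (hT₁.prodMk hT₂).aemeasurable (measurable_blsDensity hg_meas _ _ _ _ _)
    (blsDensity_nonneg hg_nonneg _ _ hσ₁ hσ₂ _) hT (by fun_prop)

theorem bls_moments_general
    {Ω : Type*} [MeasurableSpace Ω] (P : Measure Ω)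
    (g : ℝ → ℝ) (hg_meas : Measurable g) (hg_nonneg : ∀ x, 0 ≤ g x)
    (ρ : ℝ)
    (ϑ : ℝ → ℝ)
    (hϑ : ∀ s₁ s₂ : ℝ,
        (∫ z : ℝ × ℝ, Real.exp (s₁ * z.1 + s₂ * z.2) * besStdDensity g ρ z.1 z.2)
          = ϑ (s₁ ^ 2 + 2 * ρ * s₁ * s₂ + s₂ ^ 2))
    (η₁ η₂ σ₁ σ₂ : ℝ) (hη₁ : 0 < η₁) (hη₂ : 0 < η₂) (hσ₁ : 0 < σ₁) (hσ₂ : 0 < σ₂)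
    (T₁ T₂ : Ω → ℝ) (hT₁ : Measurable T₁) (hT₂ : Measurable T₂)
    (hT : Measure.map (fun ω => (T₁ ω, T₂ ω)) P
      = (volume : Measure (ℝ × ℝ)).withDensity
          (fun t => ENNReal.ofReal (blsDensity g η₁ η₂ σ₁ σ₂ ρ t))) :
    ∀ r : ℝ,
      (∫ ω, T₁ ω ^ r ∂P) = η₁ ^ r * ϑ (σ₁ ^ 2 * r ^ 2) ∧
      (∫ ω, T₂ ω ^ r ∂P) = η₂ ^ r * ϑ (σ₂ ^ 2 * r ^ 2) := by
  have hmoment (r₁ r₂ : ℝ) : ∫ ω, T₁ ω ^ r₁ * T₂ ω ^ r₂ ∂P = η₁ ^ r₁ * η₂ ^ r₂ *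
      ϑ ((σ₁ * r₁) ^ 2 + 2 * ρ * (σ₁ * r₁) * (σ₂ * r₂) + (σ₂ * r₂) ^ 2) := by
    rw [integral_rpow_mul_rpow_of_map_eq_bls hg_meas hg_nonneg ρ hη₁ hη₂ hσ₁ hσ₂ hT₁ hT₂ hT, hϑ]
  exact fun r => ⟨by simpa [mul_pow] using hmoment r 0, by simpa [mul_pow] using hmoment 0 r⟩

/-- If `ϑ` is the characteristic generator (via the MGF of the standard
BES distribution), then the moments of the BLS marginals are `E(Tᵢ^r) = ηᵢ^r ϑ(σᵢ² r²)`. -/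
theorem bls_moments
    {Ω : Type*} [MeasurableSpace Ω] (P : Measure Ω) [IsProbabilityMeasure P]
    (g : ℝ → ℝ) (hg_meas : Measurable g) (hg_nonneg : ∀ x, 0 ≤ g x)
    (hg_pos : 0 < ∫ u in Ioi (0 : ℝ), g u) (hg_int : IntegrableOn g (Ioi 0))
    (ρ : ℝ) (hρ : ρ ∈ Ioo (-1 : ℝ) 1)
    (ϑ : ℝ → ℝ)
    (hϑ : ∀ s₁ s₂ : ℝ,
        (∫ z : ℝ × ℝ, Real.exp (s₁ * z.1 + s₂ * z.2) * besStdDensity g ρ z.1 z.2)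
          = ϑ (s₁ ^ 2 + 2 * ρ * s₁ * s₂ + s₂ ^ 2))
    (η₁ η₂ σ₁ σ₂ : ℝ) (hη₁ : 0 < η₁) (hη₂ : 0 < η₂) (hσ₁ : 0 < σ₁) (hσ₂ : 0 < σ₂)
    (T₁ T₂ : Ω → ℝ) (hT₁ : Measurable T₁) (hT₂ : Measurable T₂)
    (hT : Measure.map (fun ω => (T₁ ω, T₂ ω)) P
      = (volume : Measure (ℝ × ℝ)).withDensity
          (fun t => ENNReal.ofReal (blsDensity g η₁ η₂ σ₁ σ₂ ρ t))) :
    ∀ r : ℝ,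
      (∫ ω, T₁ ω ^ r ∂P) = η₁ ^ r * ϑ (σ₁ ^ 2 * r ^ 2) ∧
      (∫ ω, T₂ ω ^ r ∂P) = η₂ ^ r * ϑ (σ₂ ^ 2 * r ^ 2) :=
  bls_moments_general P g hg_meas hg_nonneg ρ ϑ hϑ η₁ η₂ σ₁ σ₂ hη₁ hη₂ hσ₁ hσ₂ T₁ T₂ hT₁ hT₂ hT
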